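/- arXiv:2109.14018 — 3 statements merged into one kernel-verified Lean document; each statement's English description precedes it below -/
import Mathlib

section
/- Let f : ℝ^d → ℝ be real-analytic on an open set U, let Γ ⊆ U be a nonempty compact set on which f is constant with value f*, and suppose that at every point x ∈ Γ a local Łojasiewicz inequality holds: there exist θ_x ∈ (0, 1/2], κ_x > 0 and a neighborhood U_x of x such that |f(y) − f*|^{1−θ_x} ≤ κ_x ‖∇f(y)‖ for all y ∈ U_x. Then there exist uniform constants θ ∈ (0, 1/2], κ > 0 and an open neighborhood V of Γ such that |f(y) − f*|^{1−θ} ≤ κ ‖∇f(y)‖ for all y ∈ V. -/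
/-!
Where `|f - f*| ≤ 1`, lowering the exponent `θ` only decreases the left-hand side
`|f - f*| ^ (1 - θ)`, and raising `κ` only increases the right-hand side. Since `f` is continuous
and equal to `f*` on `Γ`, the local neighbourhoods can be shrunk to lie in `{|f - f*| < 1}`, and
finitely many of them cover the compact set `Γ`; the minimum of their exponents and the maximum
of their constants then work on the union.
-/

open Filter Topology

section Lojasiewicz

variable {X F : Type*} [SeminormedAddCommGroup F]

def LojasiewiczOn (g : X → ℝ) (G : X → F) (θ κ : ℝ) (V : Set X) : Prop :=
  ∀ y ∈ V, |g y| ^ (1 - θ) ≤ κ * ‖G y‖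

variable {g : X → ℝ} {G : X → F} {θ θ' κ κ' : ℝ} {V : Set X}

theorem LojasiewiczOn.mono_of_abs_le_one (h : LojasiewiczOn g G θ κ V)
    (hV : ∀ y ∈ V, |g y| ≤ 1) (hθ : θ ≤ 1) (hθ' : θ' ≤ θ) (hκ : κ ≤ κ') :
    LojasiewiczOn g G θ' κ' V := fun y hy =>
  calc |g y| ^ (1 - θ') ≤ |g y| ^ (1 - θ) :=
        Real.rpow_le_rpow_of_exponent_ge' (abs_nonneg _) (hV y hy) (by linarith) (by linarith)
    _ ≤ κ * ‖G y‖ := h y hy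
    _ ≤ κ' * ‖G y‖ := mul_le_mul_of_nonneg_right hκ (norm_nonneg _)

theorem IsCompact.exists_isOpen_lojasiewiczOn [TopologicalSpace X] {Γ : Set X}
    (hΓ : IsCompact Γ) {θ₀ : ℝ} (hθ₀ : θ₀ ∈ Set.Ioc 0 1) (hg : ∀ x ∈ Γ, ContinuousAt g x)
    (hg₀ : ∀ x ∈ Γ, g x = 0)
    (hloc : ∀ x ∈ Γ, ∃ θ ∈ Set.Ioc 0 θ₀, ∃ κ > 0, ∃ Ux ∈ 𝓝 x, LojasiewiczOn g G θ κ Ux) :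
    ∃ θ ∈ Set.Ioc 0 θ₀, ∃ κ > 0, ∃ V, IsOpen V ∧ Γ ⊆ V ∧ LojasiewiczOn g G θ κ V := by
  -- the bound `|g| ≤ 1` is what lets the union step lower the exponent
  suffices ∃ θ ∈ Set.Ioc 0 θ₀, ∃ κ > 0, ∃ V, IsOpen V ∧ Γ ⊆ V ∧
      (∀ y ∈ V, |g y| ≤ 1) ∧ LojasiewiczOn g G θ κ V by
    obtain ⟨θ, hθ, κ, hκ, V, hVo, hΓV, -, hV⟩ := this
    exact ⟨θ, hθ, κ, hκ, V, hVo, hΓV, hV⟩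
  refine hΓ.induction_on ?empty ?mono ?union ?nhds
  case empty =>
    exact ⟨θ₀, ⟨hθ₀.1, le_rfl⟩, 1, one_pos, ∅, isOpen_empty, subset_rfl,
      fun _ h => h.elim, fun _ h => h.elim⟩
  case mono =>
    rintro s t hst ⟨θ, hθ, κ, hκ, V, hVo, htV, hV⟩
    exact ⟨θ, hθ, κ, hκ, V, hVo, hst.trans htV, hV⟩
  case union =>
    rintro s t ⟨θ₁, hθ₁, κ₁, hκ₁, V₁, hV₁o, hsV₁, hV₁g, hV₁⟩
      ⟨θ₂, hθ₂, κ₂, hκ₂, V₂, hV₂o, htV₂, hV₂g, hV₂⟩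
    have hθ₁_le_one : θ₁ ≤ 1 := hθ₁.2.trans hθ₀.2
    have hθ₂_le_one : θ₂ ≤ 1 := hθ₂.2.trans hθ₀.2
    refine ⟨min θ₁ θ₂, ⟨lt_min hθ₁.1 hθ₂.1, min_le_of_left_le hθ₁.2⟩, max κ₁ κ₂,
      lt_max_of_lt_left hκ₁, V₁ ∪ V₂, hV₁o.union hV₂o, Set.union_subset_union hsV₁ htV₂,
      fun y hy => hy.elim (hV₁g y) (hV₂g y), fun y hy => hy.elim ?_ ?_⟩
    · exact hV₁.mono_of_abs_le_one hV₁g hθ₁_le_one (min_le_left _ _) (le_max_left _ _) y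
    · exact hV₂.mono_of_abs_le_one hV₂g hθ₂_le_one (min_le_right _ _) (le_max_right _ _) y
  case nhds =>
    intro x hx
    obtain ⟨θ, hθ, κ, hκ, Ux, hUx, hUxineq⟩ := hloc x hx
    have hsmall : {y | |g y| < 1} ∈ 𝓝 x :=
      (hg x hx).abs.preimage_mem_nhds (Iio_mem_nhds (by simp [hg₀ x hx]))
    let W := interior (Ux ∩ {y | |g y| < 1})
    have hW : W ∈ 𝓝 x := interior_mem_nhds.2 (inter_mem hUx hsmall)
    exact ⟨W, mem_nhdsWithin_of_mem_nhds hW, θ, hθ, κ, hκ, W, isOpen_interior, subset_rfl,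
      fun y hy => (interior_subset hy).2.le, fun y hy => hUxineq y (interior_subset hy).1⟩

end Lojasiewicz

theorem uniform_lojasiewicz_general {d : ℕ}
    (f : EuclideanSpace ℝ (Fin d) → ℝ) (U : Set (EuclideanSpace ℝ (Fin d)))
    (hf : AnalyticOnNhd ℝ f U)
    (Γ : Set (EuclideanSpace ℝ (Fin d))) (hΓU : Γ ⊆ U)
    (hΓc : IsCompact Γ)
    (fstar : ℝ) (hconst : ∀ x ∈ Γ, f x = fstar)
    (hloc : ∀ x ∈ Γ, ∃ θ ∈ Set.Ioc (0 : ℝ) (1 / 2), ∃ κ > (0 : ℝ),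
      ∃ Ux ∈ 𝓝 x, ∀ y ∈ Ux, |f y - fstar| ^ (1 - θ) ≤ κ * ‖gradient f y‖) :
    ∃ θ ∈ Set.Ioc (0 : ℝ) (1 / 2), ∃ κ > (0 : ℝ),
      ∃ V : Set (EuclideanSpace ℝ (Fin d)), IsOpen V ∧ Γ ⊆ V ∧
        ∀ y ∈ V, |f y - fstar| ^ (1 - θ) ≤ κ * ‖gradient f y‖ :=
  hΓc.exists_isOpen_lojasiewiczOn (g := fun y => f y - fstar) (G := gradient f)
    ⟨by norm_num, by norm_num⟩ (fun x hx => (hf x (hΓU hx)).continuousAt.sub continuousAt_const)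
    (fun x hx => sub_eq_zero.2 (hconst x hx)) hloc

/-- **Uniform Łojasiewicz inequality.** If `f` is real-analytic on an open set `U`,
`Γ ⊆ U` is a nonempty compact set on which `f` is constant equal to `f*`, and at
every point of `Γ` a local Łojasiewicz inequality holds, then there are uniform
constants `θ ∈ (0, 1/2]`, `κ > 0` and an open neighborhood `V` of `Γ` such that
`|f(y) - f*| ^ (1 - θ) ≤ κ ‖∇f(y)‖` for all `y ∈ V`. -/
theorem uniform_lojasiewicz {d : ℕ}
    (f : EuclideanSpace ℝ (Fin d) → ℝ) (U : Set (EuclideanSpace ℝ (Fin d)))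
    (hU : IsOpen U) (hf : AnalyticOnNhd ℝ f U)
    (Γ : Set (EuclideanSpace ℝ (Fin d))) (hΓU : Γ ⊆ U)
    (hΓne : Γ.Nonempty) (hΓc : IsCompact Γ)
    (fstar : ℝ) (hconst : ∀ x ∈ Γ, f x = fstar)
    (hloc : ∀ x ∈ Γ, ∃ θ ∈ Set.Ioc (0 : ℝ) (1 / 2), ∃ κ > (0 : ℝ),
      ∃ Ux ∈ 𝓝 x, ∀ y ∈ Ux, |f y - fstar| ^ (1 - θ) ≤ κ * ‖gradient f y‖) :
    ∃ θ ∈ Set.Ioc (0 : ℝ) (1 / 2), ∃ κ > (0 : ℝ),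
      ∃ V : Set (EuclideanSpace ℝ (Fin d)), IsOpen V ∧ Γ ⊆ V ∧
        ∀ y ∈ V, |f y - fstar| ^ (1 - θ) ≤ κ * ‖gradient f y‖ :=
  uniform_lojasiewicz_general f U hf Γ hΓU hΓc fstar hconst hloc
end

section
/- Let X ⊆ ℝ^d be compact, f : ℝ^d → ℝ continuously differentiable, and (x_n) a sequence in X satisfying, for constants a > 0, C > 0: the sufficient decrease condition f(x_{n+1}) ≤ f(x_n) − a ‖∇f(x_n)‖² and the step bound ‖x_{n+1} − x_n‖ ≤ C ‖∇f(x_n)‖ for all n. Suppose further that, with f* = lim_n f(x_n) and Γ = {x ∈ X : f(x) = f*}, there are constants θ ∈ (0, 1/2], κ > 0 and a neighborhood V of Γ on which the Łojasiewicz inequality |f(y) − f*|^{1−θ} ≤ κ ‖∇f(y)‖ holds. Then ∇f(x_n) → 0, the series Σ_n ‖∇f(x_n)‖ converges, and the sequence (x_n) converges to a limit x* with ∇f(x*) = 0. -/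
open Filter Topology

/-! With `Δₙ = f(xₙ) - f*`, concavity of `t ↦ t ^ θ` turns the sufficient decrease and the
Łojasiewicz inequality into `‖∇f(xₙ)‖ ≤ κ / (a θ) · (Δₙ ^ θ - Δₙ₊₁ ^ θ)`, which telescopes, so the
gradient norms are summable and, by the step bound, `(xₙ)` is Cauchy. The inequality is available
because the iterates eventually enter `V`: `f` stays away from `f*` on the compact set `X \ V`. -/

theorem Real.mul_rpow_sub_one_mul_sub_le {θ u v : ℝ} (hθ₀ : 0 < θ) (hθ₁ : θ ≤ 1)
    (hu : 0 < u) (hv : 0 ≤ v) :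
    θ * u ^ (θ - 1) * (u - v) ≤ u ^ θ - v ^ θ := by
  have hvu : 0 ≤ v / u := div_nonneg hv hu.le
  have bernoulli := rpow_one_add_le_one_add_mul_self (s := v / u - 1) (by linarith) hθ₀.le hθ₁
  rw [add_sub_cancel, div_rpow hv hu.le, div_le_iff₀ (rpow_pos_of_pos hu θ)] at bernoulli
  have hpow : u ^ θ = u ^ (θ - 1) * u := by
    rw [rpow_sub_one hu.ne', div_mul_cancel₀ _ hu.ne']
  have : θ * u ^ (θ - 1) * (u - v) = θ * (1 - v / u) * u ^ θ := by
    rw [hpow]; field_simp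
  rw [this]
  nlinarith

theorem Real.le_mul_rpow_sub_rpow_of_lojasiewicz {a θ κ s Δ Δ' : ℝ} (ha : 0 < a) (hθ₀ : 0 < θ)
    (hθ₁ : θ ≤ 1) (hκ : 0 < κ) (hs : 0 ≤ s) (hΔ' : 0 ≤ Δ')
    (hdec : a * s ^ 2 ≤ Δ - Δ') (hloj : Δ ^ (1 - θ) ≤ κ * s) :
    s ≤ κ / (a * θ) * (Δ ^ θ - Δ' ^ θ) := by
  have hΔ'Δ : Δ' ≤ Δ := by nlinarith [sq_nonneg s]
  rcases hs.eq_or_lt with rfl | hs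
  · have : Δ' ^ θ ≤ Δ ^ θ := rpow_le_rpow hΔ' hΔ'Δ hθ₀.le
    have : 0 ≤ κ / (a * θ) := by positivity
    nlinarith
  have hΔ : 0 < Δ := by nlinarith [mul_pos ha (pow_pos hs 2)]
  have hconc := mul_rpow_sub_one_mul_sub_le hθ₀ hθ₁ hΔ hΔ'
  -- multiplying the concavity bound by the Łojasiewicz bound cancels the powers of `Δ`
  have hcancel : Δ ^ (1 - θ) * Δ ^ (θ - 1) = 1 := by
    rw [← rpow_add hΔ]; simp
  have key : θ * a * s ^ 2 ≤ κ * s * (Δ ^ θ - Δ' ^ θ) := by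
    calc θ * a * s ^ 2 ≤ θ * (Δ - Δ') := by nlinarith
      _ = θ * (Δ ^ (1 - θ) * Δ ^ (θ - 1)) * (Δ - Δ') := by rw [hcancel, mul_one]
      _ = Δ ^ (1 - θ) * (θ * Δ ^ (θ - 1) * (Δ - Δ')) := by ring
      _ ≤ κ * s * (θ * Δ ^ (θ - 1) * (Δ - Δ')) := by
        gcongr
      _ ≤ κ * s * (Δ ^ θ - Δ' ^ θ) := by gcongr
  rw [div_mul_eq_mul_div, le_div_iff₀ (by positivity)]
  nlinarith

theorem summable_of_le_mul_sub_succ {s φ : ℕ → ℝ} {c : ℝ} (hs : ∀ n, 0 ≤ s n) (hc : 0 ≤ c)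
    (hφ : ∀ n, 0 ≤ φ n) (h : ∀ n, s n ≤ c * (φ n - φ (n + 1))) : Summable s := by
  refine summable_of_sum_range_le hs (c := c * φ 0) fun n => ?_
  calc ∑ i ∈ Finset.range n, s i ≤ ∑ i ∈ Finset.range n, c * (φ i - φ (i + 1)) :=
        Finset.sum_le_sum fun i _ => h i
    _ = c * (φ 0 - φ n) := by rw [← Finset.mul_sum, Finset.sum_range_sub']
    _ ≤ c * φ 0 := by nlinarith [hφ n]

theorem summable_of_lojasiewicz {s Δ : ℕ → ℝ} {a θ κ : ℝ} (ha : 0 < a) (hθ₀ : 0 < θ)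
    (hθ₁ : θ ≤ 1) (hκ : 0 < κ) (hs : ∀ n, 0 ≤ s n) (hΔ : ∀ n, 0 ≤ Δ n)
    (hdec : ∀ n, a * s n ^ 2 ≤ Δ n - Δ (n + 1))
    (hloj : ∀ᶠ n in atTop, Δ n ^ (1 - θ) ≤ κ * s n) : Summable s := by
  obtain ⟨N, hN⟩ := eventually_atTop.1 hloj
  rw [← summable_nat_add_iff N]
  refine summable_of_le_mul_sub_succ (c := κ / (a * θ)) (φ := fun n => Δ (n + N) ^ θ) (fun n => hs _)
    (by positivity) (fun n => Real.rpow_nonneg (hΔ _) θ) fun n => ?_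
  rw [Nat.add_right_comm]
  exact Real.le_mul_rpow_sub_rpow_of_lojasiewicz ha hθ₀ hθ₁ hκ (hs _) (hΔ _)
    (hdec _) (hN _ (Nat.le_add_left N n))

theorem IsCompact.eventually_mem_of_tendsto_comp {E β ι : Type*} [TopologicalSpace E]
    [TopologicalSpace β] [T2Space β] {X V : Set E} {f : E → β} {c : β} {x : ι → E}
    {l : Filter ι} (hX : IsCompact X) (hf : ContinuousOn f X) (hV : IsOpen V)
    (hXV : {y ∈ X | f y = c} ⊆ V) (hxX : ∀ᶠ n in l, x n ∈ X)
    (hfx : Tendsto (f ∘ x) l (𝓝 c)) : ∀ᶠ n in l, x n ∈ V := by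
  have hK : IsCompact (f '' (X \ V)) :=
    ((hX.diff hV).image_of_continuousOn (hf.mono Set.sdiff_subset))
  have hc : c ∉ f '' (X \ V) := by
    rintro ⟨y, ⟨hyX, hyV⟩, rfl⟩
    exact hyV (hXV ⟨hyX, rfl⟩)
  filter_upwards [hxX, hfx (hK.isClosed.isOpen_compl.mem_nhds hc)] with n hnX hnK
  by_contra hnV
  exact hnK ⟨x n, ⟨hnX, hnV⟩, rfl⟩

theorem ContDiff.continuous_gradient {𝕜 F : Type*} [RCLike 𝕜] [NormedAddCommGroup F]
    [InnerProductSpace 𝕜 F] [CompleteSpace F] {f : F → 𝕜} (hf : ContDiff 𝕜 1 f) :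
    Continuous (gradient f) :=
  (InnerProductSpace.toDual 𝕜 F).symm.continuous.comp (hf.continuous_fderiv one_ne_zero)

theorem lojasiewicz_convergence_general {d : ℕ}
    (X : Set (EuclideanSpace ℝ (Fin d))) (hX : IsCompact X)
    (f : EuclideanSpace ℝ (Fin d) → ℝ) (hf : ContDiff ℝ 1 f)
    (x : ℕ → EuclideanSpace ℝ (Fin d)) (hxX : ∀ n, x n ∈ X)
    (a C : ℝ) (ha : 0 < a)
    (hdec : ∀ n, f (x (n + 1)) ≤ f (x n) - a * ‖gradient f (x n)‖ ^ 2)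
    (hstep : ∀ n, ‖x (n + 1) - x n‖ ≤ C * ‖gradient f (x n)‖)
    (fstar : ℝ) (hfstar : Tendsto (fun n => f (x n)) atTop (𝓝 fstar))
    (θ κ : ℝ) (hθ : θ ∈ Set.Ioc (0 : ℝ) (1 / 2)) (hκ : 0 < κ)
    (V : Set (EuclideanSpace ℝ (Fin d))) (hVopen : IsOpen V)
    (hΓV : {y ∈ X | f y = fstar} ⊆ V)
    (hloj : ∀ y ∈ V, |f y - fstar| ^ (1 - θ) ≤ κ * ‖gradient f y‖) :
    Tendsto (fun n => gradient f (x n)) atTop (𝓝 0) ∧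
    Summable (fun n => ‖gradient f (x n)‖) ∧
    ∃ xstar, Tendsto x atTop (𝓝 xstar) ∧ gradient f xstar = 0 := by
  have hanti : Antitone (f ∘ x) := antitone_nat_of_succ_le fun n => by
    dsimp only [Function.comp_apply]
    nlinarith [hdec n, mul_nonneg ha.le (sq_nonneg ‖gradient f (x n)‖)]
  have hgap : ∀ n, 0 ≤ f (x n) - fstar := fun n => sub_nonneg.2 (hanti.le_of_tendsto hfstar n)
  have hV : ∀ᶠ n in atTop, x n ∈ V := hX.eventually_mem_of_tendsto_comp hf.continuous.continuousOn
    hVopen hΓV (Eventually.of_forall hxX) hfstar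
  have hsum : Summable fun n => ‖gradient f (x n)‖ :=
    summable_of_lojasiewicz ha hθ.1 (hθ.2.trans (by norm_num)) hκ (fun n => norm_nonneg _) hgap
      (fun n => by linarith [hdec n]) <| hV.mono fun n hn => by
        simpa only [abs_of_nonneg (hgap n)] using hloj (x n) hn
  have hgrad : Tendsto (fun n => gradient f (x n)) atTop (𝓝 0) :=
    tendsto_zero_iff_norm_tendsto_zero.2 hsum.tendsto_atTop_zero
  obtain ⟨xstar, hxstar⟩ := cauchySeq_tendsto_of_complete <|
    cauchySeq_of_dist_le_of_summable (f := x) _ (fun n => by rw [dist_comm, dist_eq_norm]; exact hstep n)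
      (hsum.mul_left C)
  exact ⟨hgrad, hsum, xstar, hxstar,
    tendsto_nhds_unique ((hf.continuous_gradient.tendsto xstar).comp hxstar) hgrad⟩

/-- **Łojasiewicz convergence lemma.** Let `X ⊆ ℝ^d` be compact, `f` be `C¹`, and
`(x_n) ⊆ X` satisfy the sufficient decrease condition
`f(x_{n+1}) ≤ f(x_n) - a ‖∇f(x_n)‖²` and the step bound
`‖x_{n+1} - x_n‖ ≤ C ‖∇f(x_n)‖`. If, with `f* = lim f(x_n)` and
`Γ = {x ∈ X : f(x) = f*}`, a Łojasiewicz inequality holds on a neighborhood of `Γ`,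
then `∇f(x_n) → 0`, `Σ ‖∇f(x_n)‖ < ∞`, and `x_n` converges to a critical point. -/
theorem lojasiewicz_convergence {d : ℕ}
    (X : Set (EuclideanSpace ℝ (Fin d))) (hX : IsCompact X)
    (f : EuclideanSpace ℝ (Fin d) → ℝ) (hf : ContDiff ℝ 1 f)
    (x : ℕ → EuclideanSpace ℝ (Fin d)) (hxX : ∀ n, x n ∈ X)
    (a C : ℝ) (ha : 0 < a) (hC : 0 < C)
    (hdec : ∀ n, f (x (n + 1)) ≤ f (x n) - a * ‖gradient f (x n)‖ ^ 2)
    (hstep : ∀ n, ‖x (n + 1) - x n‖ ≤ C * ‖gradient f (x n)‖)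
    (fstar : ℝ) (hfstar : Tendsto (fun n => f (x n)) atTop (𝓝 fstar))
    (θ κ : ℝ) (hθ : θ ∈ Set.Ioc (0 : ℝ) (1 / 2)) (hκ : 0 < κ)
    (V : Set (EuclideanSpace ℝ (Fin d))) (hVopen : IsOpen V)
    (hΓV : {y ∈ X | f y = fstar} ⊆ V)
    (hloj : ∀ y ∈ V, |f y - fstar| ^ (1 - θ) ≤ κ * ‖gradient f y‖) :
    Tendsto (fun n => gradient f (x n)) atTop (𝓝 0) ∧
    Summable (fun n => ‖gradient f (x n)‖) ∧
    ∃ xstar, Tendsto x atTop (𝓝 xstar) ∧ gradient f xstar = 0 :=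
  lojasiewicz_convergence_general X hX f hf x hxX a C ha hdec hstep fstar hfstar θ κ hθ hκ V hVopen
    hΓV hloj
end

section
/- Under the hypotheses of the preceding convergence lemma (compact X ⊆ ℝ^d, sufficient decrease f(x_{n+1}) ≤ f(x_n) − a ‖∇f(x_n)‖², step bound ‖x_{n+1} − x_n‖ ≤ C ‖∇f(x_n)‖), if the Łojasiewicz exponent can be taken to be θ = 1/2 on a neighborhood of the limit, i.e., |f(y) − f*|^{1/2} ≤ κ ‖∇f(y)‖ near the limit point x*, then the convergence is geometric: there exist constants M > 0 and 0 < q < 1 such that ‖x_n − x*‖ ≤ M q^n for all n. -/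
open Filter Topology

/-!
For the gap `eₙ = f(xₙ) - f* ≥ 0`, sufficient decrease and the Łojasiewicz inequality with
exponent `1/2` (i.e. `eₙ ≤ κ² ‖∇f(xₙ)‖²`) give `eₙ₊₁ ≤ (1 - a/κ²) eₙ`, so `√eₙ` decays
geometrically. Sufficient decrease also gives `a ‖∇f(xₙ)‖² ≤ eₙ`, so the steps are bounded by a
multiple of `√eₙ`; geometrically decaying steps make `‖xₙ - x*‖` at most a geometric tail sum.
-/

lemma exists_eventually_le_mul_pow_of_eventually_le_mul {u : ℕ → ℝ} {r : ℝ} (hr : 0 < r)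
    (h : ∀ᶠ n in atTop, u (n + 1) ≤ r * u n) : ∃ D, ∀ᶠ n in atTop, u n ≤ D * r ^ n := by
  obtain ⟨N, hN⟩ := eventually_atTop.mp h
  refine ⟨u N / r ^ N, eventually_atTop.mpr ⟨N, fun n hn => ?_⟩⟩
  obtain ⟨k, rfl⟩ := Nat.exists_eq_add_of_le hn
  calc u (N + k) ≤ r ^ k * u N :=
        le_geom (u := fun k => u (N + k)) hr.le k fun j _ => hN (N + j) (Nat.le_add_right N j)
    _ = u N / r ^ N * r ^ (N + k) := by rw [pow_add]; field_simp

lemma exists_forall_le_mul_pow_of_eventually_le_mul_pow {u : ℕ → ℝ} {r D : ℝ} (hr : 0 < r)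
    (h : ∀ᶠ n in atTop, u n ≤ D * r ^ n) : ∃ M > 0, ∀ n, u n ≤ M * r ^ n := by
  obtain ⟨B, hB⟩ : BddAbove (Set.range fun n => u n / r ^ n) :=
    (isBoundedUnder_of_eventually_le (a := D) <| h.mono fun n hn => by
      rwa [div_le_iff₀ (pow_pos hr n)]).bddAbove_range
  refine ⟨max B 1, by positivity, fun n => ?_⟩
  calc u n ≤ B * r ^ n := (div_le_iff₀ (pow_pos hr n)).mp (hB ⟨n, rfl⟩)
    _ ≤ max B 1 * r ^ n := by gcongr; exact le_max_left _ _

lemma le_one_sub_div_sq_mul_of_le_sub_of_sqrt_le {e e' g a κ : ℝ} (ha : 0 ≤ a) (hκ : 0 < κ)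
    (he : 0 ≤ e) (hdec : e' ≤ e - a * g ^ 2) (hloj : √e ≤ κ * g) : e' ≤ (1 - a / κ ^ 2) * e := by
  have hsq : e ≤ κ ^ 2 * g ^ 2 := by
    calc e = √e ^ 2 := (Real.sq_sqrt he).symm
      _ ≤ (κ * g) ^ 2 := by gcongr
      _ = κ ^ 2 * g ^ 2 := by ring
  have : a / κ ^ 2 * e ≤ a * g ^ 2 := by
    rw [div_mul_eq_mul_div, div_le_iff₀ (by positivity)]
    nlinarith
  linarith

theorem exists_dist_le_geometric_of_sufficient_decrease {E : Type*} [PseudoMetricSpace E]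
    {x : ℕ → E} {y : E} {e g : ℕ → ℝ} {a C κ : ℝ} (ha : 0 < a) (hC : 0 ≤ C) (hκ : 0 < κ)
    (he : ∀ n, 0 ≤ e n) (hdec : ∀ n, e (n + 1) ≤ e n - a * g n ^ 2)
    (hstep : ∀ n, dist (x n) (x (n + 1)) ≤ C * g n)
    (hloj : ∀ᶠ n in atTop, √(e n) ≤ κ * g n) (hx : Tendsto x atTop (𝓝 y)) :
    ∃ M > 0, ∃ q : ℝ, 0 < q ∧ q < 1 ∧ ∀ n, dist (x n) y ≤ M * q ^ n := by
  -- the `max` with `1/2` only keeps the ratio positive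
  set q₀ := max (1 - a / κ ^ 2) (1 / 2)
  have hq₀ : 0 < q₀ := lt_max_of_lt_right (by norm_num)
  have hq₀1 : q₀ < 1 := max_lt (by linarith [div_pos ha (pow_pos hκ 2)]) (by norm_num)
  have hq : 0 < √q₀ := Real.sqrt_pos.mpr hq₀
  have hq1 : √q₀ < 1 := (Real.sqrt_lt' one_pos).2 (by rwa [one_pow])
  have hcontr : ∀ᶠ n in atTop, √(e (n + 1)) ≤ √q₀ * √(e n) := hloj.mono fun n hn => by
    rw [← Real.sqrt_mul hq₀.le]
    refine Real.sqrt_le_sqrt (le_trans ?_ (mul_le_mul_of_nonneg_right (le_max_left _ _) (he n)))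
    exact le_one_sub_div_sq_mul_of_le_sub_of_sqrt_le ha.le hκ (he n) (hdec n) hn
  obtain ⟨D, hD⟩ :=
    exists_eventually_le_mul_pow_of_eventually_le_mul (u := fun n => √(e n)) hq hcontr
  have hgrad : ∀ n, √a * g n ≤ √(e n) := fun n => by
    refine Real.le_sqrt_of_sq_le ?_
    rw [mul_pow, Real.sq_sqrt ha.le]
    linarith [hdec n, he (n + 1)]
  have hstep' : ∀ᶠ n in atTop, dist (x n) (x (n + 1)) ≤ C / √a * D * √q₀ ^ n :=
    hD.mono fun n hn => calc
      dist (x n) (x (n + 1)) ≤ C * g n := hstep n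
      _ = C / √a * (√a * g n) := by field_simp
      _ ≤ C / √a * (D * √q₀ ^ n) :=
        mul_le_mul_of_nonneg_left ((hgrad n).trans hn) (by positivity)
      _ = C / √a * D * √q₀ ^ n := by ring
  obtain ⟨M, hM, hMstep⟩ := exists_forall_le_mul_pow_of_eventually_le_mul_pow hq hstep'
  refine ⟨M / (1 - √q₀), div_pos hM (sub_pos.2 hq1), √q₀, hq, hq1, fun n => ?_⟩
  exact (dist_le_of_le_geometric_of_tendsto _ M hq1 hMstep hx n).trans_eq (by ring)

theorem lojasiewicz_geometric_convergence_general {d : ℕ}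
    (f : EuclideanSpace ℝ (Fin d) → ℝ)
    (x : ℕ → EuclideanSpace ℝ (Fin d))
    (a C : ℝ) (ha : 0 < a) (hC : 0 < C)
    (hdec : ∀ n, f (x (n + 1)) ≤ f (x n) - a * ‖gradient f (x n)‖ ^ 2)
    (hstep : ∀ n, ‖x (n + 1) - x n‖ ≤ C * ‖gradient f (x n)‖)
    (fstar : ℝ) (hfstar : Tendsto (fun n => f (x n)) atTop (𝓝 fstar))
    (xstar : EuclideanSpace ℝ (Fin d)) (hxstar : Tendsto x atTop (𝓝 xstar))
    (κ : ℝ) (hκ : 0 < κ)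
    (V : Set (EuclideanSpace ℝ (Fin d))) (hV : V ∈ 𝓝 xstar)
    (hloj : ∀ y ∈ V, |f y - fstar| ^ ((1 : ℝ) / 2) ≤ κ * ‖gradient f y‖) :
    ∃ M > (0 : ℝ), ∃ q : ℝ, 0 < q ∧ q < 1 ∧ ∀ n, ‖x n - xstar‖ ≤ M * q ^ n := by
  set e := fun n => f (x n) - fstar
  have hdec' : ∀ n, e (n + 1) ≤ e n - a * ‖gradient f (x n)‖ ^ 2 := fun n => by
    simp only [e]; linarith [hdec n]
  have he : ∀ n, 0 ≤ e n :=
    (antitone_nat_of_succ_le fun n => (hdec' n).trans (sub_le_self _ (by positivity))).le_of_tendsto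
      (by simpa [e] using hfstar.sub_const fstar)
  have hloj' : ∀ᶠ n in atTop, √(e n) ≤ κ * ‖gradient f (x n)‖ :=
    (hxstar.eventually_mem hV).mono fun n hn => by
      rw [Real.sqrt_eq_rpow, ← abs_of_nonneg (he n)]; exact hloj _ hn
  simpa [dist_eq_norm] using exists_dist_le_geometric_of_sufficient_decrease ha hC.le hκ he hdec'
    (by simpa [dist_eq_norm, norm_sub_rev] using hstep) hloj' hxstar

/-- If, in addition to the hypotheses of the Łojasiewicz convergence lemma (compact
`X ⊆ ℝ^d`, sufficient decrease, step bound), the Łojasiewicz exponent may be taken to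
be `θ = 1/2` on a neighborhood of the limit `x*`, then the convergence is geometric:
`‖x_n - x*‖ ≤ M qⁿ` for some `M > 0` and `0 < q < 1`. -/
theorem lojasiewicz_geometric_convergence {d : ℕ}
    (X : Set (EuclideanSpace ℝ (Fin d))) (hX : IsCompact X)
    (f : EuclideanSpace ℝ (Fin d) → ℝ) (hf : ContDiff ℝ 1 f)
    (x : ℕ → EuclideanSpace ℝ (Fin d)) (hxX : ∀ n, x n ∈ X)
    (a C : ℝ) (ha : 0 < a) (hC : 0 < C)
    (hdec : ∀ n, f (x (n + 1)) ≤ f (x n) - a * ‖gradient f (x n)‖ ^ 2)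
    (hstep : ∀ n, ‖x (n + 1) - x n‖ ≤ C * ‖gradient f (x n)‖)
    (fstar : ℝ) (hfstar : Tendsto (fun n => f (x n)) atTop (𝓝 fstar))
    (xstar : EuclideanSpace ℝ (Fin d)) (hxstar : Tendsto x atTop (𝓝 xstar))
    (κ : ℝ) (hκ : 0 < κ)
    (V : Set (EuclideanSpace ℝ (Fin d))) (hV : V ∈ 𝓝 xstar)
    (hloj : ∀ y ∈ V, |f y - fstar| ^ ((1 : ℝ) / 2) ≤ κ * ‖gradient f y‖) :
    ∃ M > (0 : ℝ), ∃ q : ℝ, 0 < q ∧ q < 1 ∧ ∀ n, ‖x n - xstar‖ ≤ M * q ^ n :=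
  lojasiewicz_geometric_convergence_general f x a C ha hC hdec hstep fstar hfstar xstar hxstar κ hκ
    V hV hloj
end
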